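/- arXiv:1802.00779 — 3 statements merged into one kernel-verified Lean document; each statement's English description precedes it below -/
import Mathlib

section
/- For any two partitions λ and μ, the following identity holds in the Laurent polynomial ring ℤ[t₁^{±1}, t₂^{±1}]: G_μ + t₁t₂·Ḡ_λ − (1−t₁)(1−t₂)·G_μ·Ḡ_λ = ∑_{□ ∈ μ} t₁^{−a_μ(□)} t₂^{l_λ(□)+1} + ∑_{□ ∈ λ} t₁^{a_λ(□)+1} t₂^{−l_μ(□)}, where in the first sum the box □ = (i,j) ranges over the diagram of μ and one takes the arm-length in μ and the leg-length of the same box position in λ, and in the second sum □ ranges over the diagram of λ and one takes the arm-length in λ and the leg-length of the same box position in μ. -/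
/-! Laurent polynomials in two variables `t₁, t₂`: the group algebra of `ℤ × ℤ`
over `ℤ`, where `(a, b)` records the exponents of `t₁` and `t₂`. -/
noncomputable abbrev LaurentTwo := AddMonoidAlgebra ℤ (ℤ × ℤ)

/-- The monomial `t₁ ^ a * t₂ ^ b`. -/
noncomputable def tMon (a b : ℤ) : LaurentTwo := AddMonoidAlgebra.single (a, b) 1

/- A partition is a weakly decreasing, eventually zero sequence `l : ℕ → ℕ`
(0-indexed: `λᵢ = l (i-1)`); its diagram consists of the 0-indexed boxes
`(i, j)` with `j < l i`, corresponding to the paper's boxes `(i+1, j+1)`. -/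

/-- `G_λ = ∑_{(i,j) ∈ λ} t₁^{1-j} t₂^{1-i}` (1-indexed boxes), i.e.
`∑ t₁^{-j} t₂^{-i}` over 0-indexed boxes. -/
noncomputable def GP (l : ℕ → ℕ) : LaurentTwo :=
  ∑ᶠ (p : ℕ × ℕ) (_ : p.2 < l p.1), tMon (-(p.2 : ℤ)) (-(p.1 : ℤ))

/-- `Ḡ_λ`: the image of `G_λ` under `t₁ ↦ t₁⁻¹`, `t₂ ↦ t₂⁻¹`. -/
noncomputable def GPbar (l : ℕ → ℕ) : LaurentTwo :=
  ∑ᶠ (p : ℕ × ℕ) (_ : p.2 < l p.1), tMon (p.2 : ℤ) (p.1 : ℤ)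

/-- The conjugate partition: `conjPart l j = λ′_{j+1} = #{i : l i > j}`. -/
noncomputable def conjPart (l : ℕ → ℕ) (j : ℕ) : ℕ := Nat.card {i : ℕ // j < l i}

/-!
Since `λ′_j = #{k | j < λ_k}`, the power `t₂^(λ′_j)` is `1 + (t₂ - 1) ∑_{k : j < λ_k} t₂^k`,
and likewise for `t₂^(-μ′_j)`. Substituting this, the first sum on the right becomes `G_μ` plus
`(t₂ - 1)` times a sum over pairs (row `i` of `μ`, row `k` of `λ`) of
`t₂^(k-i) ∑_{j < min(μ_i, λ_k)} t₁^(j+1-μ_i)`; the second becomes `t₁t₂ Ḡ_λ` minus `(t₂ - 1)` times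
the same pair sum with `t₁^(λ_k-j)` in place of `t₁^(j+1-μ_i)`. The identity then reduces, pair by
pair, to the one-variable identity
`(1 - t₁) (∑_{j<p} t₁^(-j)) (∑_{j<q} t₁^j) = ∑_{j < min(p,q)} (t₁^(j+1-p) - t₁^(q-j))`.
-/

open Finset

lemma finsum_lt_eq_sum_range {M : Type*} [AddCommMonoid M] {f : ℕ → ℕ} {N : ℕ}
    (hN : ∀ i, N ≤ i → f i = 0) (F : ℕ × ℕ → M) :
    ∑ᶠ (p : ℕ × ℕ) (_ : p.2 < f p.1), F p = ∑ i ∈ range N, ∑ j ∈ range (f i), F (i, j) := by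
  have hlt : ∀ i, 0 < f i → i < N := fun i hi => by
    by_contra h
    simp [hN i (not_lt.1 h)] at hi
  set M := (range N).sup f
  rw [finsum_cond_eq_sum_of_cond_iff F (t := (range N ×ˢ range M).filter fun p => p.2 < f p.1)
    fun {p} _ => ?_, sum_filter, sum_product]
  · refine sum_congr rfl fun i hi => ?_
    rw [← sum_filter]
    congr 1
    ext j
    have : f i ≤ M := le_sup hi
    simp only [mem_filter, mem_range]
    omega
  · simp only [mem_filter, mem_product, mem_range, iff_and_self]
    intro hp
    exact ⟨hlt _ (by omega), hp.trans_le (le_sup (mem_range.2 (hlt _ (by omega))))⟩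

lemma tMon_mul_tMon (a b c d : ℤ) : tMon a b * tMon c d = tMon (a + c) (b + d) := by
  simp [tMon, AddMonoidAlgebra.single_mul_single]

lemma tMon_pow (a b : ℤ) (n : ℕ) : tMon a b ^ n = tMon (n * a) (n * b) := by
  simp [tMon, AddMonoidAlgebra.single_pow]

lemma mul_sum_range_tMon (a b c : ℤ) (f : ℕ → ℤ) (n : ℕ) :
    tMon a b * ∑ j ∈ range n, tMon (f j) c = ∑ j ∈ range n, tMon (a + f j) (b + c) := by
  simp only [mul_sum, tMon_mul_tMon]

lemma sum_range_tMon_sub (a b : ℤ) (n : ℕ) :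
    ∑ j ∈ range n, tMon (a - j) b = ∑ j ∈ range n, tMon (a + 1 - n + j) b := by
  rw [← sum_range_reflect]
  refine sum_congr rfl fun j hj => ?_
  simp only [mem_range] at hj
  congr 1
  omega

lemma sum_range_tMon_add_one_sub (b : ℤ) (n : ℕ) :
    ∑ j ∈ range n, tMon (j + 1 - n) b = ∑ j ∈ range n, tMon (-j) b := by
  have := sum_range_tMon_sub 0 b n
  simp only [zero_sub, zero_add] at this
  rw [this]
  exact sum_congr rfl fun j _ => by ring_nf

lemma one_sub_mul_sum_range_tMon (n : ℕ) :
    (1 - tMon 1 0) * ∑ j ∈ range n, tMon j 0 = 1 - tMon n 0 := by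
  simpa [tMon_pow] using mul_neg_geom_sum (tMon 1 0) n

section Conjugate

variable {l : ℕ → ℕ} {N : ℕ}

lemma setOf_lt_eq_Iio_conjPart (hl : Antitone l) (hN : ∀ i, N ≤ i → l i = 0) (j : ℕ) :
    {k | j < l k} = Set.Iio (conjPart l j) := by
  have hex : ∃ k, l k ≤ j := ⟨N, by simp [hN N le_rfl]⟩
  have hIio : {k | j < l k} = Set.Iio (Nat.find hex) := by
    ext k
    simp only [Set.mem_ofPred_eq, Set.mem_Iio]
    constructor
    · intro hk
      by_contra hle
      exact (hl (not_lt.1 hle)).trans (Nat.find_spec hex) |>.not_gt hk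
    · intro hk
      exact not_le.1 (Nat.find_min hex hk)
  change _ = Set.Iio (Nat.card ({k | j < l k} : Set ℕ))
  rw [hIio, Nat.card_coe_set_eq, Set.ncard_Iio_nat]

lemma filter_range_lt_eq_range_conjPart (hl : Antitone l) (hN : ∀ i, N ≤ i → l i = 0) (j : ℕ) :
    (range N).filter (fun k => j < l k) = range (conjPart l j) := by
  ext k
  have hk : j < l k ↔ k < conjPart l j := Set.ext_iff.1 (setOf_lt_eq_Iio_conjPart hl hN j) k
  simp only [mem_filter, mem_range, ← hk, and_iff_right_iff_imp]
  intro hjk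
  by_contra hNk
  simp [hN k (not_lt.1 hNk)] at hjk

lemma tMon_conjPart_mul (hl : Antitone l) (hN : ∀ i, N ≤ i → l i = 0) (s : ℤ) (j : ℕ) :
    tMon 0 (conjPart l j * s)
      = 1 + (tMon 0 s - 1) * ∑ k ∈ range N with j < l k, tMon 0 (k * s) := by
  rw [filter_range_lt_eq_range_conjPart hl hN]
  have := mul_geom_sum (tMon 0 s) (conjPart l j)
  simp only [tMon_pow, mul_zero] at this
  linear_combination -this

lemma sum_range_mul_tMon_conjPart (hl : Antitone l) (hN : ∀ i, N ≤ i → l i = 0) (s : ℤ)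
    (c : ℕ → LaurentTwo) (p : ℕ) :
    ∑ j ∈ range p, c j * tMon 0 (conjPart l j * s)
      = ∑ j ∈ range p, c j
        + (tMon 0 s - 1) * ∑ k ∈ range N, tMon 0 (k * s) * ∑ j ∈ range (min p (l k)), c j := by
  have hmin : ∀ k, range (min p (l k)) = (range p).filter (· < l k) := fun k => by
    ext j; simp
  simp only [tMon_conjPart_mul hl hN, hmin, sum_filter, mul_add, mul_one, sum_add_distrib, mul_sum]
  congr 1
  rw [sum_comm]
  refine sum_congr rfl fun j _ => sum_congr rfl fun k _ => ?_
  split_ifs <;> ring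

end Conjugate

/- With `B n = ∑_{j<n} t₁^j`, both sides equal `t₁^(1-p) B_{min p q} (1 - t₁^(max p q))`,
because `B p * B q = B (min p q) * B (max p q)`. -/
lemma one_sub_mul_sum_range_mul_sum_range (p q : ℕ) :
    (1 - tMon 1 0) * ((∑ j ∈ range p, tMon (-j) 0) * ∑ j ∈ range q, tMon j 0)
      = ∑ j ∈ range (min p q), (tMon (j + 1 - p) 0 - tMon (q - j) 0) := by
  set B : ℕ → LaurentTwo := fun n => ∑ j ∈ range n, tMon j 0
  have hshift : ∀ (a : ℤ) (n : ℕ), ∑ j ∈ range n, tMon (a + j) 0 = tMon a 0 * B n := fun a n => by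
    simp [B, mul_sum_range_tMon]
  have hA : ∑ j ∈ range p, tMon (-j) 0 = tMon (1 - p) 0 * B p := by
    simpa [← hshift] using sum_range_tMon_sub 0 0 p
  have hC : ∑ j ∈ range (min p q), tMon (j + 1 - p) 0 = tMon (1 - p) 0 * B (min p q) := by
    rw [← hshift]; exact sum_congr rfl fun j _ => by ring_nf
  have hD : ∑ j ∈ range (min p q), tMon (q - j) 0 = tMon (q + 1 - min p q) 0 * B (min p q) := by
    rw [sum_range_tMon_sub, hshift]
  have hBB : B p * B q = B (min p q) * B (max p q) := by
    rcases le_total p q with h | h <;> simp [h, mul_comm]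
  have hexp : tMon (q + 1 - min p q) 0 = tMon (1 - p) 0 * tMon ((max p q : ℕ) : ℤ) 0 := by
    rw [tMon_mul_tMon]; congr 1; omega
  rw [sum_sub_distrib, hA, hC, hD, hexp, mul_assoc, hBB]
  linear_combination (tMon (1 - p) 0 * B (min p q)) * one_sub_mul_sum_range_tMon (max p q)

section ArmLeg

variable {l m : ℕ → ℕ} {N : ℕ}

lemma sum_arm_leg_left (hl : Antitone l) (hN : ∀ i, N ≤ i → l i = 0) :
    ∑ i ∈ range N, ∑ j ∈ range (m i),
        tMon (-((m i : ℤ) - (j : ℤ) - 1)) (((conjPart l j : ℤ) - (i : ℤ) - 1) + 1)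
      = ∑ i ∈ range N, ∑ j ∈ range (m i), tMon (-j) (-i)
        + (tMon 0 1 - 1) * ∑ i ∈ range N, ∑ k ∈ range N,
            ∑ j ∈ range (min (m i) (l k)), tMon (j + 1 - m i) (k - i) := by
  rw [mul_sum, ← sum_add_distrib]
  refine sum_congr rfl fun i _ => ?_
  calc _ = ∑ j ∈ range (m i), tMon (j + 1 - m i) (-i) * tMon 0 (conjPart l j * 1) :=
        sum_congr rfl fun j _ => by rw [tMon_mul_tMon]; congr 1 <;> ring
    _ = _ := by
      rw [sum_range_mul_tMon_conjPart hl hN, sum_range_tMon_add_one_sub]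
      congr 2
      refine sum_congr rfl fun k _ => ?_
      rw [mul_sum_range_tMon]
      exact sum_congr rfl fun j _ => by ring_nf

lemma sum_arm_leg_right (hm : Antitone m) (hN : ∀ i, N ≤ i → m i = 0) :
    ∑ k ∈ range N, ∑ j ∈ range (l k),
        tMon (((l k : ℤ) - (j : ℤ) - 1) + 1) (-((conjPart m j : ℤ) - (k : ℤ) - 1))
      = tMon 1 1 * ∑ k ∈ range N, ∑ j ∈ range (l k), tMon j k
        - (tMon 0 1 - 1) * ∑ i ∈ range N, ∑ k ∈ range N,
            ∑ j ∈ range (min (m i) (l k)), tMon (l k - j) (k - i) := by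
  rw [sum_comm (s := range N) (t := range N), mul_sum, mul_sum, ← sum_sub_distrib]
  refine sum_congr rfl fun k _ => ?_
  have hreflect : ∑ j ∈ range (l k), tMon (l k - j) (k + 1)
      = tMon 1 1 * ∑ j ∈ range (l k), tMon j k := by
    rw [sum_range_tMon_sub, mul_sum_range_tMon]
    exact sum_congr rfl fun j _ => by ring_nf
  have hcross : ∀ i ∈ range N,
      tMon 0 (i * -1) * ∑ j ∈ range (min (l k) (m i)), tMon (l k - j) (k + 1)
        = tMon 0 1 * ∑ j ∈ range (min (m i) (l k)), tMon (l k - j) (k - i) := fun i _ => by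
    rw [min_comm, mul_sum_range_tMon, mul_sum_range_tMon]
    exact sum_congr rfl fun j _ => by ring_nf
  have hinv : tMon 0 (-1) * tMon 0 1 = 1 := by
    rw [tMon_mul_tMon]; rfl
  calc _ = ∑ j ∈ range (l k), tMon (l k - j) (k + 1) * tMon 0 (conjPart m j * -1) :=
        sum_congr rfl fun j _ => by rw [tMon_mul_tMon]; congr 1 <;> ring
    _ = _ := by
      rw [sum_range_mul_tMon_conjPart hm hN, hreflect, sum_congr rfl hcross, ← mul_sum]
      linear_combination
        (∑ i ∈ range N, ∑ j ∈ range (min (m i) (l k)), tMon (l k - j) (k - i)) * hinv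

end ArmLeg

lemma one_sub_mul_sum_mul_sum (m l : ℕ → ℕ) (N : ℕ) :
    (1 - tMon 1 0) * ((∑ i ∈ range N, ∑ j ∈ range (m i), tMon (-j) (-i))
        * ∑ k ∈ range N, ∑ j ∈ range (l k), tMon j k)
      = ∑ i ∈ range N, ∑ k ∈ range N, ∑ j ∈ range (min (m i) (l k)), tMon (j + 1 - m i) (k - i)
        - ∑ i ∈ range N, ∑ k ∈ range N, ∑ j ∈ range (min (m i) (l k)), tMon (l k - j) (k - i) := by
  have hrow : ∀ (f : ℕ → ℤ) (b : ℤ) (n : ℕ),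
      ∑ j ∈ range n, tMon (f j) b = tMon 0 b * ∑ j ∈ range n, tMon (f j) 0 := fun f b n => by
    simp [mul_sum_range_tMon]
  rw [sum_mul_sum, mul_sum, ← sum_sub_distrib]
  refine sum_congr rfl fun i _ => ?_
  rw [mul_sum, ← sum_sub_distrib]
  refine sum_congr rfl fun k _ => ?_
  have hmon : tMon 0 (k - i) = tMon 0 (-i) * tMon 0 k := by
    rw [tMon_mul_tMon]; congr 1; ring
  rw [hrow _ (-i), hrow _ k, hrow _ (k - i), hrow _ (k - i), ← mul_sub, ← sum_sub_distrib,
    ← one_sub_mul_sum_range_mul_sum_range, hmon]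
  ring

/-- The identity
`G_μ + t₁t₂ Ḡ_λ − (1−t₁)(1−t₂) G_μ Ḡ_λ
  = ∑_{□∈μ} t₁^{−a_μ(□)} t₂^{l_λ(□)+1} + ∑_{□∈λ} t₁^{a_λ(□)+1} t₂^{−l_μ(□)}`,
where for a 0-indexed box `(i,j)` the arm and leg lengths are
`a_ν(i,j) = ν_{i+1} − (j+1)` and `l_ν(i,j) = ν′_{j+1} − (i+1)`. -/
theorem ext_character_identity (l m : ℕ → ℕ)
    (hl : Antitone l) (hm : Antitone m)
    (hl0 : ∃ N, ∀ i, N ≤ i → l i = 0) (hm0 : ∃ N, ∀ i, N ≤ i → m i = 0) :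
    GP m + tMon 1 1 * GPbar l - (1 - tMon 1 0) * (1 - tMon 0 1) * (GP m * GPbar l)
      =
      (∑ᶠ (p : ℕ × ℕ) (_ : p.2 < m p.1),
        tMon (-((m p.1 : ℤ) - (p.2 : ℤ) - 1)) (((conjPart l p.2 : ℤ) - (p.1 : ℤ) - 1) + 1))
      +
      (∑ᶠ (p : ℕ × ℕ) (_ : p.2 < l p.1),
        tMon (((l p.1 : ℤ) - (p.2 : ℤ) - 1) + 1) (-((conjPart m p.2 : ℤ) - (p.1 : ℤ) - 1))) := by
  obtain ⟨Nl, hNl⟩ := hl0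
  obtain ⟨Nm, hNm⟩ := hm0
  have hlN : ∀ i, max Nl Nm ≤ i → l i = 0 := fun i hi => hNl i (le_of_max_le_left hi)
  have hmN : ∀ i, max Nl Nm ≤ i → m i = 0 := fun i hi => hNm i (le_of_max_le_right hi)
  rw [GP, GPbar, finsum_lt_eq_sum_range hmN, finsum_lt_eq_sum_range hlN,
    finsum_lt_eq_sum_range hmN, finsum_lt_eq_sum_range hlN,
    sum_arm_leg_left hl hlN, sum_arm_leg_right hm hmN]
  linear_combination (tMon 0 1 - 1) * one_sub_mul_sum_mul_sum m l (max Nl Nm)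
end

section
/- For any two partitions λ and μ, every coefficient of the Laurent polynomial G_μ + t₁t₂·Ḡ_λ − (1−t₁)(1−t₂)·G_μ·Ḡ_λ ∈ ℤ[t₁^{±1}, t₂^{±1}] is nonnegative, and the sum of all its coefficients equals |λ| + |μ|; that is, this Laurent polynomial is a sum of exactly |λ| + |μ| monomials counted with multiplicity. -/
namespace ExtCharAux

open Finset

lemma tMon_mul (a b c d : ℤ) : tMon a b * tMon c d = tMon (a + c) (b + d) := by
  simp [tMon, AddMonoidAlgebra.single_mul_single, Prod.mk_add_mk]

lemma tMon_congr {a b a' b' : ℤ} (h1 : a = a') (h2 : b = b') :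
    tMon a b = tMon a' b' := by rw [h1, h2]

lemma one_eq_tMon : (1 : LaurentTwo) = tMon 0 0 := by
  rw [tMon, AddMonoidAlgebra.one_def]; rfl

/-- conjugate partition, `0`-indexed: height of column `j`. -/
noncomputable def cnj (l : ℕ → ℕ) (j : ℕ) : ℕ := sInf {i | l i ≤ j}

lemma cnj_le {l : ℕ → ℕ} {N j : ℕ} (hN : l N = 0) : cnj l j ≤ N :=
  Nat.sInf_le (by simp [Set.mem_setOf_eq, hN])

lemma lt_cnj {l : ℕ → ℕ} (hl : Antitone l) {N : ℕ} (hN : l N = 0) {i j : ℕ} :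
    j < l i ↔ i < cnj l j := by
  constructor
  · intro h
    by_contra hc
    push_neg at hc
    have hne : {i | l i ≤ j}.Nonempty := ⟨N, by simp [Set.mem_setOf_eq, hN]⟩
    have h2 : l (cnj l j) ≤ j := Nat.sInf_mem hne
    have h3 : l i ≤ l (cnj l j) := hl hc
    omega
  · intro h
    by_contra hc
    push_neg at hc
    have h2 : cnj l j ≤ i := Nat.sInf_le (show i ∈ {i | l i ≤ j} from hc)
    omega

lemma filter_lt_range {c P : ℕ} (h : c ≤ P) :
    (range P).filter (fun j => j < c) = range c := by
  ext x; simp only [mem_filter, mem_range]; omega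

lemma filter_cnj {l : ℕ → ℕ} (hl : Antitone l) {N : ℕ} (hN : l N = 0) {P j : ℕ}
    (hP : N ≤ P) : (range P).filter (fun i => j < l i) = range (cnj l j) := by
  have hle : cnj l j ≤ N := cnj_le hN
  ext i
  simp only [mem_filter, mem_range]
  constructor
  · rintro ⟨-, h⟩; exact (lt_cnj hl hN).mp h
  · intro h; exact ⟨by omega, (lt_cnj hl hN).mpr h⟩

/-- Exchange a double sum over rows of a partition into a double sum over
columns. -/
lemma exchange {M : Type*} [AddCommMonoid M] {l : ℕ → ℕ} (hl : Antitone l)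
    {N : ℕ} (hN : l N = 0) {P Q : ℕ} (hP : N ≤ P) (hQ : l 0 ≤ Q)
    (f : ℕ → ℕ → M) :
    ∑ k ∈ range P, ∑ j ∈ range (l k), f k j
      = ∑ j ∈ range Q, ∑ k ∈ range (cnj l j), f k j := by
  have h1 : ∀ k, ∑ j ∈ range (l k), f k j
      = ∑ j ∈ range Q, if j < l k then f k j else 0 := by
    intro k
    rw [← Finset.sum_filter, filter_lt_range (le_trans (hl (Nat.zero_le k)) hQ)]
  have h2 : ∀ j, ∑ k ∈ range (cnj l j), f k j
      = ∑ k ∈ range P, if j < l k then f k j else 0 := by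
    intro j
    rw [← Finset.sum_filter, filter_cnj hl hN hP]
  simp only [h1, h2]
  exact Finset.sum_comm

/-- Triangle exchange. -/
lemma triangle {M : Type*} [AddCommMonoid M] (n : ℕ) (F : ℕ → ℕ → M) :
    ∑ k ∈ range n, ∑ i ∈ range k, F i k
      = ∑ i ∈ range n, ∑ k ∈ range (n - (i + 1)), F i (i + 1 + k) := by
  have h1 : ∀ k ∈ range n, ∑ i ∈ range k, F i k
      = ∑ i ∈ range n, if i < k then F i k else 0 := by
    intro k hk
    rw [mem_range] at hk
    rw [← Finset.sum_filter, filter_lt_range (le_of_lt hk)]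
  rw [Finset.sum_congr rfl h1, Finset.sum_comm]
  refine Finset.sum_congr rfl fun i _ => ?_
  rw [← Finset.sum_filter]
  have h2 : (range n).filter (fun k => i < k) = Finset.Ico (i + 1) n := by
    ext x; simp only [mem_filter, mem_range, Finset.mem_Ico]; omega
  rw [h2, Finset.sum_Ico_eq_sum_range]

/-- Telescoping over an interval. -/
lemma sum_Ico_sub' {M : Type*} [AddCommGroup M] (f : ℕ → M) {a b : ℕ}
    (h : a ≤ b) : ∑ j ∈ Finset.Ico a b, (f j - f (j + 1)) = f a - f b := by
  rw [Finset.sum_Ico_eq_sum_range]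
  have := Finset.sum_range_sub' (fun k => f (a + k)) (b - a)
  simp only [Nat.add_zero] at this
  calc ∑ k ∈ range (b - a), (f (a + k) - f (a + k + 1))
      = ∑ k ∈ range (b - a), (f (a + k) - f (a + (k + 1))) := by
        refine Finset.sum_congr rfl fun k _ => ?_
        rw [show a + (k + 1) = a + k + 1 from rfl]
    _ = f a - f (a + (b - a)) := this
    _ = f a - f b := by rw [Nat.add_sub_cancel' h]

section Main

variable (l m : ℕ → ℕ) (N : ℕ)

noncomputable def AA : LaurentTwo :=
  ∑ i ∈ range (N + 1), ∑ j ∈ range (m i), tMon (-(j : ℤ)) (-(i : ℤ))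

noncomputable def BB : LaurentTwo :=
  ∑ k ∈ range (N + 1), ∑ j ∈ range (l k), tMon (j : ℤ) (k : ℤ)

noncomputable def H1 : LaurentTwo :=
  ∑ i ∈ range (N + 1), ∑ j ∈ range (m i),
    tMon ((l i : ℤ) - j) ((i : ℤ) + 1 - cnj m j)

noncomputable def H2 : LaurentTwo :=
  ∑ k ∈ range (N + 1), ∑ j ∈ range (l k),
    tMon ((j : ℤ) + 1 - m k) ((cnj l j : ℤ) - k)

variable {l m N}

/-- `(1 - t₁) * (row c at height b) = t₁^{1-c} t₂^b - t₁ t₂^b`. -/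
lemma telA (b : ℤ) (c : ℕ) :
    (1 - tMon 1 0) * ∑ j ∈ range c, tMon (-(j : ℤ)) b
      = tMon (1 - (c : ℤ)) b - tMon 1 b := by
  rw [Finset.mul_sum]
  have h : ∀ j : ℕ, (1 - tMon 1 0) * tMon (-(j : ℤ)) b
      = tMon (1 - ((j + 1 : ℕ) : ℤ)) b - tMon (1 - (j : ℤ)) b := by
    intro j
    rw [sub_mul, one_mul, tMon_mul]
    have e1 : (-(j : ℤ)) = 1 - ((j + 1 : ℕ) : ℤ) := by push_cast; ring
    have e2 : (1 + -(j : ℤ)) = 1 - (j : ℤ) := by ring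
    have e3 : (0 + b) = b := by ring
    rw [e2, e3]
    nth_rewrite 1 [e1]
    rfl
  rw [Finset.sum_congr rfl fun j _ => h j, Finset.sum_range_sub
      (fun j => tMon (1 - (j : ℤ)) b)]
  norm_num

/-- The per-row identity (Lemma "B2"): for every `r ≤ N`,
`t₁t₂ - (1-t₁)(1-t₂) G_μ` expands into corner terms of `μ` at row `r`. -/
lemma lemL (hm : Antitone m) (hmN : ∀ i, N ≤ i → m i = 0) {r : ℕ} (hr : r ≤ N) :
    tMon 1 1 - (1 - tMon 1 0) * (1 - tMon 0 1) * AA m N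
      = tMon (1 - (m r : ℤ)) (1 - (r : ℤ))
        + (∑ i ∈ range r,
            (tMon (1 - (m i : ℤ)) (1 - (i : ℤ)) - tMon (1 - (m i : ℤ)) (-(i : ℤ))))
        + ∑ j ∈ range (m r),
            (tMon (1 - (j : ℤ)) (1 - (cnj m j : ℤ))
              - tMon (-(j : ℤ)) (1 - (cnj m j : ℤ))) := by
  have hm0 : m N = 0 := hmN N le_rfl
  -- Step 1: expand (1-t₁)(1-t₂)A
  have hA1 : (1 - tMon 1 0) * AA m N
      = ∑ i ∈ range (N + 1),
          (tMon (1 - (m i : ℤ)) (-(i : ℤ)) - tMon 1 (-(i : ℤ))) := by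
    rw [AA, Finset.mul_sum]
    exact Finset.sum_congr rfl fun i _ => telA _ _
  have hmul : ∀ (a b : ℤ), tMon a b * (1 - tMon 0 1) = tMon a b - tMon a (b + 1) := by
    intro a b
    rw [mul_sub, mul_one, tMon_mul]
    rw [show (a + 0) = a from by ring]
  have hA2 : (1 - tMon 1 0) * (1 - tMon 0 1) * AA m N
      = ∑ i ∈ range (N + 1),
          ((tMon (1 - (m i : ℤ)) (-(i : ℤ)) - tMon (1 - (m i : ℤ)) (-(i : ℤ) + 1))
            - (tMon 1 (-(i : ℤ)) - tMon 1 (-(i : ℤ) + 1))) := by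
    rw [mul_right_comm, hA1, Finset.sum_mul]
    refine Finset.sum_congr rfl fun i _ => ?_
    rw [sub_mul, hmul, hmul]
  -- Step 2: clean up the exponents
  have hA3 : (1 - tMon 1 0) * (1 - tMon 0 1) * AA m N
      = ∑ i ∈ range (N + 1),
          ((tMon (1 - (m i : ℤ)) (-(i : ℤ)) - tMon (1 - (m i : ℤ)) (1 - (i : ℤ)))
            - (tMon 1 (-(i : ℤ)) - tMon 1 (1 - (i : ℤ)))) := by
    rw [hA2]
    refine Finset.sum_congr rfl fun i _ => ?_
    rw [tMon_congr (rfl : (1 - (m i : ℤ)) = _) (show (-(i : ℤ) + 1) = 1 - (i : ℤ) from by ring),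
      tMon_congr (rfl : (1 : ℤ) = 1) (show (-(i : ℤ) + 1) = 1 - (i : ℤ) from by ring)]
  have hT' : (∑ i ∈ range (N + 1), tMon 1 (1 - (i : ℤ)))
        - ∑ i ∈ range (N + 1), tMon 1 (-(i : ℤ))
      = tMon 1 1 - tMon 1 (-(N : ℤ)) := by
    rw [← Finset.sum_sub_distrib]
    have h := Finset.sum_range_sub' (fun i => tMon 1 (1 - (i : ℤ))) (N + 1)
    calc ∑ i ∈ range (N + 1), (tMon 1 (1 - (i : ℤ)) - tMon 1 (-(i : ℤ)))
        = ∑ i ∈ range (N + 1),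
            (tMon 1 (1 - (i : ℤ)) - tMon 1 (1 - ((i + 1 : ℕ) : ℤ))) := by
          refine Finset.sum_congr rfl fun i _ => ?_
          rw [tMon_congr (rfl : (1:ℤ) = 1)
            (show (-(i:ℤ)) = 1 - ((i + 1 : ℕ) : ℤ) from by push_cast; ring)]
      _ = tMon 1 (1 - ((0 : ℕ) : ℤ)) - tMon 1 (1 - ((N + 1 : ℕ) : ℤ)) := h
      _ = tMon 1 1 - tMon 1 (-(N : ℤ)) := by
          rw [tMon_congr (rfl : (1:ℤ) = 1) (show (1 - ((0:ℕ):ℤ)) = 1 from by norm_num),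
            tMon_congr (rfl : (1:ℤ) = 1)
              (show (1 - ((N + 1 : ℕ) : ℤ)) = -(N:ℤ) from by push_cast; ring)]
  have hstep : tMon 1 1 - (1 - tMon 1 0) * (1 - tMon 0 1) * AA m N
      = ∑ i ∈ range (N + 1),
          (tMon (1 - (m i : ℤ)) (1 - (i : ℤ)) - tMon (1 - (m i : ℤ)) (-(i : ℤ)))
        + tMon 1 (-(N : ℤ)) := by
    rw [hA3]
    simp only [Finset.sum_sub_distrib]
    linear_combination -hT'
  rw [hstep]
  -- Step 3: split the sum at r
  have hsplit : ∑ i ∈ range (N + 1),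
        (tMon (1 - (m i : ℤ)) (1 - (i : ℤ)) - tMon (1 - (m i : ℤ)) (-(i : ℤ)))
      = (∑ i ∈ range r,
          (tMon (1 - (m i : ℤ)) (1 - (i : ℤ)) - tMon (1 - (m i : ℤ)) (-(i : ℤ))))
        + ∑ i ∈ Finset.Ico r (N + 1),
          (tMon (1 - (m i : ℤ)) (1 - (i : ℤ)) - tMon (1 - (m i : ℤ)) (-(i : ℤ))) := by
    exact (Finset.sum_range_add_sum_Ico _ (by omega : r ≤ N + 1)).symm
  rw [hsplit]
  -- Step 4: the Ico part
  have hu : ∑ i ∈ Finset.Ico r (N + 1), tMon (1 - (m i : ℤ)) (1 - (i : ℤ))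
      = tMon (1 - (m r : ℤ)) (1 - (r : ℤ))
        + ∑ i ∈ Finset.Ico r N, tMon (1 - (m (i + 1) : ℤ)) (-(i : ℤ)) := by
    rw [Finset.sum_eq_sum_Ico_succ_bot (by omega)
      (fun i => tMon (1 - (m i : ℤ)) (1 - (i : ℤ)))]
    congr 1
    rw [Finset.sum_Ico_eq_sum_range, Finset.sum_Ico_eq_sum_range]
    rw [show N + 1 - (r + 1) = N - r from by omega]
    refine Finset.sum_congr rfl fun k _ => ?_
    exact tMon_congr (by rw [show r + 1 + k = r + k + 1 from by omega])
      (by push_cast; ring)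
  have hd : ∑ i ∈ Finset.Ico r (N + 1), tMon (1 - (m i : ℤ)) (-(i : ℤ))
      = ∑ i ∈ Finset.Ico r N, tMon (1 - (m i : ℤ)) (-(i : ℤ))
        + tMon 1 (-(N : ℤ)) := by
    rw [Finset.sum_Ico_succ_top hr]
    congr 1
    exact tMon_congr (by rw [hm0]; norm_num) rfl
  -- Step 5: the skew telescoping core
  have core : (∑ i ∈ Finset.Ico r N, tMon (1 - (m (i + 1) : ℤ)) (-(i : ℤ)))
        - ∑ i ∈ Finset.Ico r N, tMon (1 - (m i : ℤ)) (-(i : ℤ))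
      = (∑ j ∈ range (m r), tMon (1 - (j : ℤ)) (1 - (cnj m j : ℤ)))
        - ∑ j ∈ range (m r), tMon (-(j : ℤ)) (1 - (cnj m j : ℤ)) := by
    rw [← Finset.sum_sub_distrib, ← Finset.sum_sub_distrib]
    have hrow : ∀ i ∈ Finset.Ico r N,
        tMon (1 - (m (i + 1) : ℤ)) (-(i : ℤ)) - tMon (1 - (m i : ℤ)) (-(i : ℤ))
          = ∑ j ∈ range (m r), if m (i + 1) ≤ j ∧ j < m i then
              (tMon (1 - (j : ℤ)) (-(i : ℤ)) - tMon (-(j : ℤ)) (-(i : ℤ))) else 0 := by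
      intro i hi
      rw [Finset.mem_Ico] at hi
      have hsub : m i ≤ m r := hm hi.1
      have hfilter : (range (m r)).filter (fun j => m (i + 1) ≤ j ∧ j < m i)
          = Finset.Ico (m (i + 1)) (m i) := by
        ext x
        simp only [mem_filter, mem_range, Finset.mem_Ico]
        omega
      rw [← Finset.sum_filter, hfilter]
      have htel := sum_Ico_sub' (fun j => tMon (1 - (j : ℤ)) (-(i : ℤ)))
        (hm (Nat.le_succ i))
      calc tMon (1 - (m (i + 1) : ℤ)) (-(i : ℤ)) - tMon (1 - (m i : ℤ)) (-(i : ℤ))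
          = ∑ j ∈ Finset.Ico (m (i + 1)) (m i),
              (tMon (1 - (j : ℤ)) (-(i : ℤ))
                - tMon (1 - ((j + 1 : ℕ) : ℤ)) (-(i : ℤ))) := htel.symm
        _ = _ := by
            refine Finset.sum_congr rfl fun j _ => ?_
            rw [tMon_congr
              (show (1 - ((j + 1 : ℕ) : ℤ)) = -(j : ℤ) from by push_cast; ring) rfl]
    rw [Finset.sum_congr rfl hrow, Finset.sum_comm]
    refine Finset.sum_congr rfl fun j hj => ?_
    rw [mem_range] at hj
    have h1 : r < cnj m j := (lt_cnj hm hm0).mp hj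
    have h2 : cnj m j ≤ N := cnj_le hm0
    have hmem : cnj m j - 1 ∈ Finset.Ico r N := by rw [Finset.mem_Ico]; omega
    have huniq : ∀ b ∈ Finset.Ico r N, b ≠ cnj m j - 1 →
        (if m (b + 1) ≤ j ∧ j < m b then
          (tMon (1 - (j : ℤ)) (-(b : ℤ)) - tMon (-(j : ℤ)) (-(b : ℤ))) else 0) = 0 := by
      intro b hb hne
      rw [Finset.mem_Ico] at hb
      rw [if_neg]
      rintro ⟨hc1, hc2⟩
      have e1 : ¬ (b + 1 < cnj m j) := by
        rw [← lt_cnj hm hm0]; omega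
      have e2 : b < cnj m j := (lt_cnj hm hm0).mp hc2
      omega
    rw [Finset.sum_eq_single_of_mem _ hmem huniq]
    have hc1 : m (cnj m j - 1 + 1) ≤ j := by
      have hx : ¬ (j < m (cnj m j)) := by
        rw [lt_cnj hm hm0]; omega
      rw [show cnj m j - 1 + 1 = cnj m j from by omega]
      omega
    have hc2 : j < m (cnj m j - 1) := by
      rw [lt_cnj hm hm0]; omega
    rw [if_pos ⟨hc1, hc2⟩]
    have he : (-((cnj m j - 1 : ℕ) : ℤ)) = 1 - (cnj m j : ℤ) := by omega
    rw [tMon_congr rfl he, tMon_congr rfl he]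
  simp only [Finset.sum_sub_distrib]
  rw [hu, hd]
  linear_combination core

/-- Lemma "B1": column-reversal form of `G_μ`. -/
lemma lemB1 (hm : Antitone m) (hmN : ∀ i, N ≤ i → m i = 0) :
    AA m N = ∑ i ∈ range (N + 1), ∑ j ∈ range (m i),
      tMon (-(j : ℤ)) ((i : ℤ) + 1 - cnj m j) := by
  have hm0 : m N = 0 := hmN N le_rfl
  rw [AA,
    exchange hm hm0 (Nat.le_succ N) le_rfl
      (fun i j => tMon (-(j : ℤ)) (-(i : ℤ))),
    exchange hm hm0 (Nat.le_succ N) le_rfl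
      (fun i j => tMon (-(j : ℤ)) ((i : ℤ) + 1 - cnj m j))]
  refine Finset.sum_congr rfl fun j _ => ?_
  rw [← Finset.sum_range_reflect
    (fun i => tMon (-(j : ℤ)) (-(i : ℤ))) (cnj m j)]
  refine Finset.sum_congr rfl fun i hi => ?_
  rw [mem_range] at hi
  exact tMon_congr rfl (by omega)

/-- The master "arm–leg hook" identity. -/
lemma master (hl : Antitone l) (hm : Antitone m)
    (hlN : ∀ i, N ≤ i → l i = 0) (hmN : ∀ i, N ≤ i → m i = 0) :
    AA m N + tMon 1 1 * BB l N
      - (1 - tMon 1 0) * (1 - tMon 0 1) * (AA m N * BB l N)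
      = H1 l m N + H2 l m N := by
  have hl0 : l N = 0 := hlN N le_rfl
  -- rearrange the non-A part
  have hfact : tMon 1 1 * BB l N
      - (1 - tMon 1 0) * (1 - tMon 0 1) * (AA m N * BB l N)
      = ∑ k ∈ range (N + 1), ∑ j' ∈ range (l k),
          tMon (j' : ℤ) (k : ℤ)
            * (tMon 1 1 - (1 - tMon 1 0) * (1 - tMon 0 1) * AA m N) := by
    calc tMon 1 1 * BB l N
        - (1 - tMon 1 0) * (1 - tMon 0 1) * (AA m N * BB l N)
        = BB l N * (tMon 1 1 - (1 - tMon 1 0) * (1 - tMon 0 1) * AA m N) := by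
          ring
      _ = _ := by
          rw [BB, Finset.sum_mul]
          exact Finset.sum_congr rfl fun k _ => Finset.sum_mul _ _ _
  -- expand each term by lemL
  have hexp : ∀ k ∈ range (N + 1), ∀ j' ∈ range (l k),
      tMon (j' : ℤ) (k : ℤ)
          * (tMon 1 1 - (1 - tMon 1 0) * (1 - tMon 0 1) * AA m N)
        = tMon ((j' : ℤ) + 1 - m k) 1
          + (∑ i ∈ range k,
              (tMon ((j' : ℤ) + 1 - m i) ((k : ℤ) + 1 - i)
                - tMon ((j' : ℤ) + 1 - m i) ((k : ℤ) - i)))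
          + ∑ j ∈ range (m k),
              (tMon ((j' : ℤ) + 1 - j) ((k : ℤ) + 1 - cnj m j)
                - tMon ((j' : ℤ) - j) ((k : ℤ) + 1 - cnj m j)) := by
    intro k hk j' _
    rw [mem_range] at hk
    rw [lemL hm hmN (by omega : k ≤ N), mul_add, mul_add, Finset.mul_sum,
      Finset.mul_sum]
    congr 1
    · congr 1
      · rw [tMon_mul]
        exact tMon_congr (by ring) (by ring)
      · refine Finset.sum_congr rfl fun i _ => ?_
        rw [mul_sub, tMon_mul, tMon_mul]
        exact congrArg₂ Sub.sub (tMon_congr (by ring) (by ring))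
          (tMon_congr (by ring) (by ring))
    · refine Finset.sum_congr rfl fun j _ => ?_
      rw [mul_sub, tMon_mul, tMon_mul]
      exact congrArg₂ Sub.sub (tMon_congr (by ring) (by ring))
        (tMon_congr (by ring) (by ring))
  have hbig : tMon 1 1 * BB l N
      - (1 - tMon 1 0) * (1 - tMon 0 1) * (AA m N * BB l N)
      = (∑ k ∈ range (N + 1), ∑ j' ∈ range (l k), tMon ((j' : ℤ) + 1 - m k) 1)
        + (∑ k ∈ range (N + 1), ∑ j' ∈ range (l k), ∑ i ∈ range k,
            (tMon ((j' : ℤ) + 1 - m i) ((k : ℤ) + 1 - i)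
              - tMon ((j' : ℤ) + 1 - m i) ((k : ℤ) - i)))
        + ∑ k ∈ range (N + 1), ∑ j' ∈ range (l k), ∑ j ∈ range (m k),
            (tMon ((j' : ℤ) + 1 - j) ((k : ℤ) + 1 - cnj m j)
              - tMon ((j' : ℤ) - j) ((k : ℤ) + 1 - cnj m j)) := by
    rw [hfact,
      Finset.sum_congr rfl fun k hk => Finset.sum_congr rfl (hexp k hk)]
    simp only [Finset.sum_add_distrib]
  -- Step M3: third piece is H1 - A
  have hT3 : (∑ k ∈ range (N + 1), ∑ j' ∈ range (l k), ∑ j ∈ range (m k),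
        (tMon ((j' : ℤ) + 1 - j) ((k : ℤ) + 1 - cnj m j)
          - tMon ((j' : ℤ) - j) ((k : ℤ) + 1 - cnj m j)))
      = H1 l m N - AA m N := by
    have hk : ∀ k ∈ range (N + 1),
        (∑ j' ∈ range (l k), ∑ j ∈ range (m k),
          (tMon ((j' : ℤ) + 1 - j) ((k : ℤ) + 1 - cnj m j)
            - tMon ((j' : ℤ) - j) ((k : ℤ) + 1 - cnj m j)))
        = ∑ j ∈ range (m k),
            (tMon ((l k : ℤ) - j) ((k : ℤ) + 1 - cnj m j)
              - tMon (-(j : ℤ)) ((k : ℤ) + 1 - cnj m j)) := by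
      intro k _
      rw [Finset.sum_comm]
      refine Finset.sum_congr rfl fun j _ => ?_
      have htel := Finset.sum_range_sub
        (fun j' => tMon ((j' : ℤ) - j) ((k : ℤ) + 1 - cnj m j)) (l k)
      calc ∑ j' ∈ range (l k),
            (tMon ((j' : ℤ) + 1 - j) ((k : ℤ) + 1 - cnj m j)
              - tMon ((j' : ℤ) - j) ((k : ℤ) + 1 - cnj m j))
          = ∑ j' ∈ range (l k),
            (tMon (((j' + 1 : ℕ) : ℤ) - j) ((k : ℤ) + 1 - cnj m j)
              - tMon ((j' : ℤ) - j) ((k : ℤ) + 1 - cnj m j)) := by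
            refine Finset.sum_congr rfl fun j' _ => ?_
            exact congrArg₂ Sub.sub (tMon_congr (by push_cast; ring) rfl) rfl
        _ = tMon ((l k : ℤ) - j) ((k : ℤ) + 1 - cnj m j)
            - tMon (((0 : ℕ) : ℤ) - j) ((k : ℤ) + 1 - cnj m j) := htel
        _ = _ := by
            exact congrArg₂ Sub.sub rfl (tMon_congr (by push_cast; ring) rfl)
    rw [Finset.sum_congr rfl hk]
    simp only [Finset.sum_sub_distrib]
    rw [H1, lemB1 hm hmN]
  -- Step M4: first two pieces give H2
  have hT12 : (∑ k ∈ range (N + 1), ∑ j' ∈ range (l k), tMon ((j' : ℤ) + 1 - m k) 1)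
        + (∑ k ∈ range (N + 1), ∑ j' ∈ range (l k), ∑ i ∈ range k,
            (tMon ((j' : ℤ) + 1 - m i) ((k : ℤ) + 1 - i)
              - tMon ((j' : ℤ) + 1 - m i) ((k : ℤ) - i)))
      = H2 l m N := by
    rw [H2,
      exchange hl hl0 (Nat.le_succ N) le_rfl
        (fun k j' => tMon ((j' : ℤ) + 1 - m k) 1),
      exchange hl hl0 (Nat.le_succ N) le_rfl
        (fun k j' => ∑ i ∈ range k,
          (tMon ((j' : ℤ) + 1 - m i) ((k : ℤ) + 1 - i)
            - tMon ((j' : ℤ) + 1 - m i) ((k : ℤ) - i))),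
      exchange hl hl0 (Nat.le_succ N) le_rfl
        (fun k j' => tMon ((j' : ℤ) + 1 - m k) ((cnj l j' : ℤ) - k)),
      ← Finset.sum_add_distrib]
    refine Finset.sum_congr rfl fun j' _ => ?_
    rw [triangle (cnj l j')
      (fun i k => tMon ((j' : ℤ) + 1 - m i) ((k : ℤ) + 1 - i)
        - tMon ((j' : ℤ) + 1 - m i) ((k : ℤ) - i))]
    have hinner : ∀ i ∈ range (cnj l j'),
        (∑ k ∈ range (cnj l j' - (i + 1)),
          (tMon ((j' : ℤ) + 1 - m i) (((i + 1 + k : ℕ) : ℤ) + 1 - i)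
            - tMon ((j' : ℤ) + 1 - m i) (((i + 1 + k : ℕ) : ℤ) - i)))
        = tMon ((j' : ℤ) + 1 - m i) ((cnj l j' : ℤ) - i)
          - tMon ((j' : ℤ) + 1 - m i) 1 := by
      intro i hi
      rw [mem_range] at hi
      have htel := Finset.sum_range_sub
        (fun k => tMon ((j' : ℤ) + 1 - m i) ((k : ℤ) + 1)) (cnj l j' - (i + 1))
      calc (∑ k ∈ range (cnj l j' - (i + 1)),
            (tMon ((j' : ℤ) + 1 - m i) (((i + 1 + k : ℕ) : ℤ) + 1 - i)
              - tMon ((j' : ℤ) + 1 - m i) (((i + 1 + k : ℕ) : ℤ) - i)))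
          = ∑ k ∈ range (cnj l j' - (i + 1)),
            (tMon ((j' : ℤ) + 1 - m i) (((k + 1 : ℕ) : ℤ) + 1)
              - tMon ((j' : ℤ) + 1 - m i) ((k : ℤ) + 1)) := by
            refine Finset.sum_congr rfl fun k _ => ?_
            exact congrArg₂ Sub.sub (tMon_congr rfl (by push_cast; ring))
              (tMon_congr rfl (by push_cast; ring))
        _ = tMon ((j' : ℤ) + 1 - m i) (((cnj l j' - (i + 1) : ℕ) : ℤ) + 1)
            - tMon ((j' : ℤ) + 1 - m i) (((0 : ℕ) : ℤ) + 1) := htel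
        _ = _ := by
            exact congrArg₂ Sub.sub (tMon_congr rfl (by omega))
              (tMon_congr rfl (by norm_num))
    rw [Finset.sum_congr rfl hinner]
    simp only [Finset.sum_sub_distrib]
    abel
  linear_combination hbig + hT3 + hT12

end Main

/-- Conversion of the `finsum` definition into a bounded double sum. -/
lemma GP_eq {m : ℕ → ℕ} {N : ℕ} (hm : Antitone m) (hmN : ∀ i, N ≤ i → m i = 0) :
    GP m = AA m N := by
  rw [GP, AA]
  have hset : {p : ℕ × ℕ | p.2 < m p.1}
      = ↑(((range (N + 1)) ×ˢ (range (m 0))).filter fun p => p.2 < m p.1) := by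
    ext p
    simp only [Set.mem_setOf_eq, Finset.coe_filter, Finset.mem_product,
      mem_range]
    constructor
    · intro h
      have h1 : p.1 < N + 1 := by
        by_contra hcon
        have : m p.1 = 0 := hmN p.1 (by omega)
        omega
      exact ⟨⟨h1, lt_of_lt_of_le h (hm (Nat.zero_le p.1))⟩, h⟩
    · exact fun h => h.2
  calc (∑ᶠ (p : ℕ × ℕ) (_ : p.2 < m p.1), tMon (-(p.2 : ℤ)) (-(p.1 : ℤ)))
      = ∑ᶠ (p : ℕ × ℕ) (_ : p ∈ {q : ℕ × ℕ | q.2 < m q.1}),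
          tMon (-(p.2 : ℤ)) (-(p.1 : ℤ)) := rfl
    _ = ∑ p ∈ ((range (N + 1)) ×ˢ (range (m 0))).filter
          (fun p => p.2 < m p.1), tMon (-(p.2 : ℤ)) (-(p.1 : ℤ)) := by
        rw [hset]; exact finsum_mem_coe_finset _ _
    _ = _ := by
        rw [Finset.sum_filter, Finset.sum_product]
        refine Finset.sum_congr rfl fun i _ => ?_
        rw [← Finset.sum_filter, filter_lt_range (hm (Nat.zero_le i))]

lemma GPbar_eq {l : ℕ → ℕ} {N : ℕ} (hl : Antitone l) (hlN : ∀ i, N ≤ i → l i = 0) :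
    GPbar l = BB l N := by
  rw [GPbar, BB]
  have hset : {p : ℕ × ℕ | p.2 < l p.1}
      = ↑(((range (N + 1)) ×ˢ (range (l 0))).filter fun p => p.2 < l p.1) := by
    ext p
    simp only [Set.mem_setOf_eq, Finset.coe_filter, Finset.mem_product,
      mem_range]
    constructor
    · intro h
      have h1 : p.1 < N + 1 := by
        by_contra hcon
        have : l p.1 = 0 := hlN p.1 (by omega)
        omega
      exact ⟨⟨h1, lt_of_lt_of_le h (hl (Nat.zero_le p.1))⟩, h⟩
    · exact fun h => h.2
  calc (∑ᶠ (p : ℕ × ℕ) (_ : p.2 < l p.1), tMon (p.2 : ℤ) (p.1 : ℤ))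
      = ∑ᶠ (p : ℕ × ℕ) (_ : p ∈ {q : ℕ × ℕ | q.2 < l q.1}),
          tMon (p.2 : ℤ) (p.1 : ℤ) := rfl
    _ = ∑ p ∈ ((range (N + 1)) ×ˢ (range (l 0))).filter
          (fun p => p.2 < l p.1), tMon (p.2 : ℤ) (p.1 : ℤ) := by
        rw [hset]; exact finsum_mem_coe_finset _ _
    _ = _ := by
        rw [Finset.sum_filter, Finset.sum_product]
        refine Finset.sum_congr rfl fun i _ => ?_
        rw [← Finset.sum_filter, filter_lt_range (hl (Nat.zero_le i))]

lemma tMon_apply_nonneg (a b : ℤ) (d : ℤ × ℤ) : 0 ≤ (tMon a b).coeff d := by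
  rw [tMon]
  rw [AddMonoidAlgebra.coeff_single, Finsupp.single_apply]
  split <;> norm_num

/-- sum of all coefficients, as an additive map. -/
noncomputable def mass : LaurentTwo →+ ℤ where
  toFun f := Finsupp.sum f.coeff fun _ c => c
  map_zero' := Finsupp.sum_zero_index
  map_add' f g := by
    show Finsupp.sum (f + g).coeff (fun _ c => c) = _
    rw [AddMonoidAlgebra.coeff_add, Finsupp.sum_add_index' (fun _ => rfl) (fun _ _ _ => rfl)]

lemma mass_apply (f : LaurentTwo) : mass f = ∑ d ∈ f.coeff.support, f.coeff d := by
  show Finsupp.sum f.coeff (fun _ c => c) = _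
  rfl

lemma mass_tMon (a b : ℤ) : mass (tMon a b) = 1 := by
  show Finsupp.sum (tMon a b).coeff (fun _ c => c) = 1
  rw [tMon]
  exact Finsupp.sum_single_index rfl

end ExtCharAux

/-- Every coefficient of `G_μ + t₁t₂ Ḡ_λ − (1−t₁)(1−t₂) G_μ Ḡ_λ` is
nonnegative, and the sum of all its coefficients is `|λ| + |μ|`: this Laurent
polynomial is a sum of exactly `|λ| + |μ|` monomials counted with
multiplicity. -/
theorem ext_character_effective (l m : ℕ → ℕ)
    (hl : Antitone l) (hm : Antitone m)
    (hl0 : ∃ N, ∀ i, N ≤ i → l i = 0) (hm0 : ∃ N, ∀ i, N ≤ i → m i = 0) :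
    (∀ d : ℤ × ℤ,
      0 ≤ (GP m + tMon 1 1 * GPbar l
            - (1 - tMon 1 0) * (1 - tMon 0 1) * (GP m * GPbar l)).coeff d) ∧
    (∑ d ∈ (GP m + tMon 1 1 * GPbar l
            - (1 - tMon 1 0) * (1 - tMon 0 1) * (GP m * GPbar l)).coeff.support,
        (GP m + tMon 1 1 * GPbar l
            - (1 - tMon 1 0) * (1 - tMon 0 1) * (GP m * GPbar l)).coeff d)
      = (∑ᶠ i, (l i : ℤ)) + ∑ᶠ i, (m i : ℤ) := by
  classical
  open ExtCharAux Finset in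
  obtain ⟨N1, hN1⟩ := hl0
  obtain ⟨N2, hN2⟩ := hm0
  set N := max N1 N2 with hN
  have hlN : ∀ i, N ≤ i → l i = 0 := fun i hi => hN1 i (le_trans (le_max_left _ _) hi)
  have hmN : ∀ i, N ≤ i → m i = 0 := fun i hi => hN2 i (le_trans (le_max_right _ _) hi)
  have hEq : GP m + tMon 1 1 * GPbar l
      - (1 - tMon 1 0) * (1 - tMon 0 1) * (GP m * GPbar l)
      = H1 l m N + H2 l m N := by
    rw [GP_eq hm hmN, GPbar_eq hl hlN]
    exact master hl hm hlN hmN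
  rw [hEq]
  constructor
  · intro d
    rw [AddMonoidAlgebra.coeff_add, Finsupp.add_apply]
    refine add_nonneg ?_ ?_
    · rw [H1, AddMonoidAlgebra.coeff_sum, Finset.sum_apply']
      refine Finset.sum_nonneg fun i _ => ?_
      rw [AddMonoidAlgebra.coeff_sum, Finset.sum_apply']
      exact Finset.sum_nonneg fun j _ => tMon_apply_nonneg _ _ _
    · rw [H2, AddMonoidAlgebra.coeff_sum, Finset.sum_apply']
      refine Finset.sum_nonneg fun i _ => ?_
      rw [AddMonoidAlgebra.coeff_sum, Finset.sum_apply']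
      exact Finset.sum_nonneg fun j _ => tMon_apply_nonneg _ _ _
  · rw [← mass_apply, map_add]
    have hmassH1 : mass (H1 l m N) = ∑ i ∈ range (N + 1), (m i : ℤ) := by
      rw [H1, map_sum]
      refine Finset.sum_congr rfl fun i _ => ?_
      rw [map_sum]
      simp [mass_tMon]
    have hmassH2 : mass (H2 l m N) = ∑ i ∈ range (N + 1), (l i : ℤ) := by
      rw [H2, map_sum]
      refine Finset.sum_congr rfl fun i _ => ?_
      rw [map_sum]
      simp [mass_tMon]
    have hfl : (∑ᶠ i, (l i : ℤ)) = ∑ i ∈ range (N + 1), (l i : ℤ) := by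
      refine finsum_eq_sum_of_support_subset _ fun i hi => ?_
      simp only [Function.mem_support, ne_eq, Int.natCast_eq_zero] at hi
      simp only [Finset.coe_range, Set.mem_Iio]
      by_contra hcon
      exact hi (hlN i (by omega))
    have hfm : (∑ᶠ i, (m i : ℤ)) = ∑ i ∈ range (N + 1), (m i : ℤ) := by
      refine finsum_eq_sum_of_support_subset _ fun i hi => ?_
      simp only [Function.mem_support, ne_eq, Int.natCast_eq_zero] at hi
      simp only [Finset.coe_range, Set.mem_Iio]
      by_contra hcon
      exact hi (hmN i (by omega))
    rw [hmassH1, hmassH2, hfl, hfm]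
    ring
end

section
/- Let P ⊆ ℕ³ be a finite downward-closed subset, and let g ∈ ℤ[t₁^{±1}, t₂^{±1}] be obtained from the generating function G_P = ∑_{(a,b,c) ∈ P} t₁^{−a} t₂^{−b} t₃^{−c} by the substitution t₃ ↦ t₁⁻¹t₂⁻¹ (the Calabi–Yau specialization t₁t₂t₃ = 1). Define V = g − ḡ − (1 − t₁)(1 − t₂)(1 − t₁⁻¹t₂⁻¹)·g·ḡ ∈ ℤ[t₁^{±1}, t₂^{±1}], where bar denotes the ring involution t₁ ↦ t₁⁻¹, t₂ ↦ t₂⁻¹. Then V̄ = −V, i.e., the involution t₁ ↦ t₁⁻¹, t₂ ↦ t₂⁻¹ sends V to −V. -/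
/-- The ring involution `t₁ ↦ t₁⁻¹`, `t₂ ↦ t₂⁻¹`, induced by negating the
exponents. -/
noncomputable def barL2 : LaurentTwo ≃ₐ[ℤ] LaurentTwo :=
  AddMonoidAlgebra.domCongr ℤ ℤ (AddEquiv.neg (ℤ × ℤ))

/-- The Calabi–Yau specialization `t₃ ↦ t₁⁻¹t₂⁻¹` of the generating function
`G_P = ∑_{(a,b,c) ∈ P} t₁^{−a} t₂^{−b} t₃^{−c}` of a finite subset
`P ⊆ ℕ³`, namely `g = ∑_{(a,b,c) ∈ P} t₁^{c−a} t₂^{c−b}`. -/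
noncomputable def gCY (P : Set (ℕ × ℕ × ℕ)) : LaurentTwo :=
  ∑ᶠ (p : ℕ × ℕ × ℕ) (_ : p ∈ P),
    tMon ((p.2.2 : ℤ) - (p.1 : ℤ)) ((p.2.2 : ℤ) - (p.2.1 : ℤ))

lemma bar_tMon (a b : ℤ) : barL2 (tMon a b) = tMon (-a) (-b) := by
  simp [barL2, tMon, AddMonoidAlgebra.domCongr_single]

lemma tMon_mul (a b c d : ℤ) : tMon a b * tMon c d = tMon (a+c) (b+d) := by
  simp [tMon, AddMonoidAlgebra.single_mul_single, Prod.mk_add_mk]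

lemma one_eq_tMon : (1 : LaurentTwo) = tMon 0 0 := rfl

lemma bar_bar (x : LaurentTwo) : barL2 (barL2 x) = x := by
  induction x using AddMonoidAlgebra.induction_linear with
  | zero => simp
  | add a b ha hb => simp [map_add, ha, hb]
  | single p c => simp [barL2, AddMonoidAlgebra.domCongr_single]

lemma bar_F : barL2 ((1 - tMon 1 0) * (1 - tMon 0 1) * (1 - tMon (-1) (-1)))
    = -((1 - tMon 1 0) * (1 - tMon 0 1) * (1 - tMon (-1) (-1))) := by
  simp only [map_mul, map_sub, map_one, bar_tMon, neg_neg, neg_zero]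
  rw [one_eq_tMon]
  simp only [sub_mul, mul_sub, tMon_mul]
  norm_num
  abel

/-- For a 3-dimensional partition `P` (a finite downward closed subset of
`ℕ³`), the Calabi–Yau specialization
`V = g − ḡ − (1−t₁)(1−t₂)(1−t₁⁻¹t₂⁻¹) g ḡ` of the virtual tangent space
character is anti-invariant under `t₁ ↦ t₁⁻¹`, `t₂ ↦ t₂⁻¹`: `V̄ = −V`. -/
theorem CY_vertex_character_antisymmetric (P : Set (ℕ × ℕ × ℕ))
    (hPfin : P.Finite) (hPdc : ∀ a ∈ P, ∀ b : ℕ × ℕ × ℕ, b ≤ a → b ∈ P) :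
    barL2 (gCY P - barL2 (gCY P)
        - (1 - tMon 1 0) * (1 - tMon 0 1) * (1 - tMon (-1) (-1))
            * (gCY P * barL2 (gCY P)))
      = -(gCY P - barL2 (gCY P)
        - (1 - tMon 1 0) * (1 - tMon 0 1) * (1 - tMon (-1) (-1))
            * (gCY P * barL2 (gCY P))) := by
  rw [map_sub, map_sub, map_mul, bar_F, map_mul, bar_bar]
  ring
end
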